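/- For every unitary O, the linear operator stabilizer entropy upper-bounds the linear operator entanglement: E_lin(O) ≤ M_lin(O). -/

import Mathlib

open Matrix Kronecker

/-- The four single-qubit Pauli matrices `I, X, Y, Z`. -/
noncomputable def pauli : Fin 4 → Matrix (Fin 2) (Fin 2) ℂ :=
  ![1, !![0, 1; 1, 0], !![0, -Complex.I; Complex.I, 0], !![1, 0; 0, -1]]

/-- A Pauli string: the tensor product over the sites `i : ι` of the single-qubit
Pauli matrices `pauli (a i)`. -/
noncomputable def pauliString {ι : Type*} [Fintype ι] (a : ι → Fin 4) :
    Matrix (ι → Fin 2) (ι → Fin 2) ℂ :=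
  Matrix.of fun x y => ∏ i, pauli (a i) (x i) (y i)
/-- The partial swap `T^A₁₂` on the doubled space, swapping the two copies of
subsystem `A` and acting as the identity on the two copies of `B`. -/
noncomputable def swapA (α β : Type*) [DecidableEq α] [DecidableEq β] :
    Matrix ((α × β) × (α × β)) ((α × β) × (α × β)) ℂ :=
  Matrix.of fun p q =>
    if p.1.1 = q.2.1 ∧ p.2.1 = q.1.1 ∧ p.1.2 = q.1.2 ∧ p.2.2 = q.2.2 then 1 else 0

/-- The linear operator entanglement
`E_lin(O) = 1 - d⁻² Tr(T^A₁₂ O^{⊗2} T^A₁₂ (O†)^{⊗2})`, `d = dim(H_A ⊗ H_B)`. -/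
noncomputable def ElinC {α β : Type*} [Fintype α] [Fintype β] [DecidableEq α] [DecidableEq β]
    (O : Matrix (α × β) (α × β) ℂ) : ℂ :=
  1 - (((Fintype.card α : ℂ) * (Fintype.card β : ℂ)) ^ 2)⁻¹ *
    (swapA α β * (O ⊗ₖ O) * swapA α β * (Oᴴ ⊗ₖ Oᴴ)).trace

/-- The (real) linear operator entanglement. -/
noncomputable def ElinR {α β : Type*} [Fintype α] [Fintype β] [DecidableEq α] [DecidableEq β]
    (O : Matrix (α × β) (α × β) ℂ) : ℝ :=
  (ElinC O).re
/-- An `N = N_A + N_B` qubit Pauli string, written as a product operator across the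
bipartition into the first `N_A` and the last `N_B` qubits. -/
noncomputable def pauliP {NA NB : ℕ} (a : Fin NA → Fin 4) (b : Fin NB → Fin 4) :
    Matrix ((Fin NA → Fin 2) × (Fin NB → Fin 2)) ((Fin NA → Fin 2) × (Fin NB → Fin 2)) ℂ :=
  pauliString a ⊗ₖ pauliString b

/-- A Clifford unitary on `N = N_A + N_B` qubits: a unitary mapping every Pauli string
to a Pauli string up to a sign, under conjugation. -/
def IsCliffordP {NA NB : ℕ}
    (C : Matrix ((Fin NA → Fin 2) × (Fin NB → Fin 2)) ((Fin NA → Fin 2) × (Fin NB → Fin 2)) ℂ) :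
    Prop :=
  C ∈ Matrix.unitaryGroup ((Fin NA → Fin 2) × (Fin NB → Fin 2)) ℂ ∧
    ∀ (a : Fin NA → Fin 4) (b : Fin NB → Fin 4),
      ∃ (a' : Fin NA → Fin 4) (b' : Fin NB → Fin 4) (s : ℂ), (s = 1 ∨ s = -1) ∧
        C * pauliP a b * Cᴴ = s • pauliP a' b'

/-- The linear operator stabilizer entropy
`M_lin(O) = 1 − d⁻⁴ Σ_{P'} |Tr(O P')|⁴`, summing over all `4^N` Pauli strings `P'`
(`+1` phase), `d = 2^N`, `N = N_A + N_B`. -/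
noncomputable def MlinP {NA NB : ℕ}
    (O : Matrix ((Fin NA → Fin 2) × (Fin NB → Fin 2))
      ((Fin NA → Fin 2) × (Fin NB → Fin 2)) ℂ) : ℝ :=
  1 - (((2 : ℝ) ^ (NA + NB)) ^ 4)⁻¹ *
    ∑ a : Fin NA → Fin 4, ∑ b : Fin NB → Fin 4, ‖(O * pauliP a b).trace‖ ^ 4

/-!
Write `R` for the realignment of `O` across the bipartition,
`R_{(x,x'),(y,y')} = O_{(x,y),(x',y')}`; the partial-swap trace in `E_lin` is `Tr((R R†)²)`.
Expanded in Pauli strings, the coefficient matrix `c_{ab} = Tr(O (P_a ⊗ P_b))` is `U_A R U_Bᵀ`,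
where `U_A†U_A = d_A` and `U_B†U_B = d_B` by completeness of the Pauli basis; hence
`Tr((c c†)²) = d⁴ (1 - E_lin)`. Finally, for every complex matrix,
`Σ_{ab} |c_{ab}|⁴ ≤ Σ_a ((c c†)_{aa})² ≤ Tr((c c†)²)`.
-/

section Gram

variable {𝕜 : Type*} [RCLike 𝕜] {m n : Type*} [Fintype m] [Fintype n]

theorem Matrix.IsHermitian.re_trace_mul_self {G : Matrix m m 𝕜} (hG : G.IsHermitian) :
    RCLike.re (G * G).trace = ∑ i, ∑ k, ‖G i k‖ ^ 2 := by
  simp only [trace, diag_apply, mul_apply, map_sum]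
  refine Finset.sum_congr rfl fun i _ => Finset.sum_congr rfl fun k _ => ?_
  rw [← hG.apply k i, RCLike.star_def, RCLike.mul_conj, ← RCLike.ofReal_pow, RCLike.ofReal_re]

theorem sum_norm_pow_four_le_re_trace_sq (c : Matrix m n 𝕜) :
    ∑ i, ∑ j, ‖c i j‖ ^ 4 ≤ RCLike.re (c * cᴴ * (c * cᴴ)).trace := by
  have hdiag : ∀ i, (c * cᴴ) i i = ((∑ j, ‖c i j‖ ^ 2 : ℝ) : 𝕜) := fun i => by
    simp [mul_apply, RCLike.mul_conj]
  rw [(isHermitian_mul_conjTranspose_self c).re_trace_mul_self]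
  calc ∑ i, ∑ j, ‖c i j‖ ^ 4 = ∑ i, ∑ j, (‖c i j‖ ^ 2) ^ 2 := by simp only [← pow_mul]
    _ ≤ ∑ i, (∑ j, ‖c i j‖ ^ 2) ^ 2 :=
      Finset.sum_le_sum fun i _ => Finset.sum_sq_le_sq_sum_of_nonneg fun j _ => by positivity
    _ = ∑ i, ‖(c * cᴴ) i i‖ ^ 2 := by
      simp only [hdiag, RCLike.norm_ofReal, sq_abs]
    _ ≤ ∑ i, ∑ k, ‖(c * cᴴ) i k‖ ^ 2 :=
      Finset.sum_le_sum fun i _ =>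
        Finset.single_le_sum (f := fun k => ‖(c * cᴴ) i k‖ ^ 2) (fun k _ => by positivity)
          (Finset.mem_univ i)

end Gram

section Isometry

variable {𝕜 : Type*} [CommSemiring 𝕜] [StarRing 𝕜] {k l m n : Type*}

theorem trace_conj_mul_conj [Fintype k] [Fintype m] [DecidableEq m] {U : Matrix k m 𝕜} {s : 𝕜}
    (hU : Uᴴ * U = s • 1) (X Y : Matrix m m 𝕜) :
    (U * X * Uᴴ * (U * Y * Uᴴ)).trace = s ^ 2 * (X * Y).trace := by
  calc (U * X * Uᴴ * (U * Y * Uᴴ)).trace = (U * (X * (Uᴴ * U) * Y * Uᴴ)).trace := by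
        simp only [Matrix.mul_assoc]
    _ = (X * (Uᴴ * U) * Y * (Uᴴ * U)).trace := by
        rw [trace_mul_comm]; simp only [Matrix.mul_assoc]
    _ = s ^ 2 * (X * Y).trace := by
        rw [hU]; simp [trace_smul, pow_two, mul_assoc]

theorem mul_transpose_mul_conjTranspose [Fintype l] [Fintype n] [DecidableEq n]
    {V : Matrix l n 𝕜} {t : 𝕜} (hV : Vᴴ * V = t • 1) (X : Matrix k n 𝕜) :
    X * Vᵀ * (X * Vᵀ)ᴴ = t • (X * Xᴴ) := by
  have hVt : Vᵀ * (Vᵀ)ᴴ = t • 1 := by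
    rw [conjTranspose_transpose_eq_transpose_conjTranspose, ← transpose_mul, hV, transpose_smul,
      transpose_one]
  rw [conjTranspose_mul, Matrix.mul_assoc, ← Matrix.mul_assoc Vᵀ, hVt]
  simp [Matrix.smul_mul, Matrix.mul_smul]

theorem trace_gram_sq_conj [Fintype k] [Fintype l] [Fintype m] [Fintype n] [DecidableEq m]
    [DecidableEq n] {U : Matrix k m 𝕜} {V : Matrix l n 𝕜} {s t : 𝕜}
    (hU : Uᴴ * U = s • 1) (hV : Vᴴ * V = t • 1) (R : Matrix m n 𝕜) :
    (U * R * Vᵀ * (U * R * Vᵀ)ᴴ * (U * R * Vᵀ * (U * R * Vᵀ)ᴴ)).trace =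
      (s * t) ^ 2 * (R * Rᴴ * (R * Rᴴ)).trace := by
  have hconj : U * R * (U * R)ᴴ = U * (R * Rᴴ) * Uᴴ := by
    rw [conjTranspose_mul]; simp only [Matrix.mul_assoc]
  rw [mul_transpose_mul_conjTranspose hV, hconj, Matrix.smul_mul, Matrix.mul_smul, trace_smul,
    trace_smul, trace_conj_mul_conj hU]
  simp only [smul_eq_mul]
  ring

end Isometry

section Realign

variable {α β : Type*} [DecidableEq α] [DecidableEq β]

def realign {R : Type*} (O : Matrix (α × β) (α × β) R) : Matrix (α × α) (β × β) R :=
  of fun u v => O (u.1, v.1) (u.2, v.2)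

theorem swapA_apply (p q : (α × β) × (α × β)) :
    swapA α β p q = if ((p.2.1, p.1.2), (p.1.1, p.2.2)) = q then 1 else 0 := by
  obtain ⟨⟨a₁, b₁⟩, a₂, b₂⟩ := p
  obtain ⟨⟨c₁, d₁⟩, c₂, d₂⟩ := q
  simp only [swapA, of_apply, Prod.mk.injEq]
  exact if_congr (by tauto) rfl rfl

variable [Fintype α] [Fintype β]

theorem swapA_mul_apply (M : Matrix ((α × β) × (α × β)) ((α × β) × (α × β)) ℂ)
    (p q : (α × β) × (α × β)) :
    (swapA α β * M) p q = M ((p.2.1, p.1.2), (p.1.1, p.2.2)) q := by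
  simp [mul_apply, swapA_apply]

theorem trace_swapA_mul_kronecker (O : Matrix (α × β) (α × β) ℂ) :
    (swapA α β * (O ⊗ₖ O) * swapA α β * (Oᴴ ⊗ₖ Oᴴ)).trace =
      (realign O * (realign O)ᴴ * (realign O * (realign O)ᴴ)).trace := by
  rw [Matrix.mul_assoc (swapA α β * (O ⊗ₖ O))]
  simp only [trace, diag_apply, mul_apply (M := swapA α β * (O ⊗ₖ O)), swapA_mul_apply,
    kroneckerMap_apply, conjTranspose_apply]
  simp only [realign, mul_apply, Finset.sum_mul_sum, conjTranspose_apply, of_apply,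
    ← Finset.sum_product', Finset.univ_product_univ]
  -- `((x₁,y₁),(x₂,y₂)), ((x₁',y₁'),(x₂',y₂')) ↦ (x₂,x₁'), (x₁,x₂'), (y₁,y₁'), (y₂,y₂')`
  exact Fintype.sum_equiv
    { toFun := fun x =>
        ((x.1.2.1, x.2.1.1), (x.1.1.1, x.2.2.1), (x.1.1.2, x.2.1.2), (x.1.2.2, x.2.2.2))
      invFun := fun y =>
        (((y.2.1.1, y.2.2.1.1), (y.1.1, y.2.2.2.1)), ((y.1.2, y.2.2.1.2), (y.2.1.2, y.2.2.2.2)))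
      left_inv := fun _ => rfl
      right_inv := fun _ => rfl } _ _ fun _ => mul_mul_mul_comm _ _ _ _

end Realign

section PauliBasis

theorem pauli_completeness (u v u' v' : Fin 2) :
    ∑ p, star (pauli p u v) * pauli p u' v' = if u = u' ∧ v = v' then 2 else 0 := by
  fin_cases u <;> fin_cases v <;> fin_cases u' <;> fin_cases v' <;>
    simp [pauli, Fin.sum_univ_four, one_apply] <;> ring

noncomputable def pauliBasisMatrix (ι : Type*) [Fintype ι] :
    Matrix (ι → Fin 4) ((ι → Fin 2) × (ι → Fin 2)) ℂ :=
  of fun a xy => pauliString a xy.2 xy.1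

variable {ι κ : Type*} [Fintype ι] [Fintype κ] [DecidableEq ι] [DecidableEq κ]

theorem pauliBasisMatrix_conjTranspose_mul_self :
    (pauliBasisMatrix ι)ᴴ * pauliBasisMatrix ι = (2 ^ Fintype.card ι : ℂ) • 1 := by
  ext ⟨x, y⟩ ⟨x', y'⟩
  calc ∑ a : ι → Fin 4, star (∏ i, pauli (a i) (y i) (x i)) * ∏ i, pauli (a i) (y' i) (x' i)
      = ∏ i, ∑ p, star (pauli p (y i) (x i)) * pauli p (y' i) (x' i) := by
        simp only [star_prod, ← Finset.prod_mul_distrib, Finset.prod_univ_sum,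
          Fintype.piFinset_univ]
    _ = _ := by
        simp only [pauli_completeness, Finset.prod_ite_zero, Finset.prod_const, Finset.card_univ,
          Matrix.smul_apply, one_apply, Prod.mk.injEq, funext_iff, forall_and]
        simp [and_comm]

noncomputable def pauliCoeff
    (O : Matrix ((ι → Fin 2) × (κ → Fin 2)) ((ι → Fin 2) × (κ → Fin 2)) ℂ) :
    Matrix (ι → Fin 4) (κ → Fin 4) ℂ :=
  pauliBasisMatrix ι * realign O * (pauliBasisMatrix κ)ᵀ

theorem trace_mul_pauliString_kronecker
    (O : Matrix ((ι → Fin 2) × (κ → Fin 2)) ((ι → Fin 2) × (κ → Fin 2)) ℂ)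
    (a : ι → Fin 4) (b : κ → Fin 4) :
    (O * (pauliString a ⊗ₖ pauliString b)).trace = pauliCoeff O a b := by
  simp only [pauliCoeff, trace, diag_apply, mul_apply, kroneckerMap_apply, Finset.sum_mul,
    transpose_apply, pauliBasisMatrix, realign, of_apply, ← Finset.sum_product',
    Finset.univ_product_univ]
  exact Fintype.sum_equiv
    { toFun := fun x => ((x.1.2, x.2.2), (x.1.1, x.2.1))
      invFun := fun y => ((y.2.1, y.1.1), (y.2.2, y.1.2))
      left_inv := fun _ => rfl
      right_inv := fun _ => rfl } _ _
    fun _ => (mul_left_comm _ _ _).trans (mul_assoc _ _ _).symm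

theorem trace_pauliCoeff_gram_sq
    (O : Matrix ((ι → Fin 2) × (κ → Fin 2)) ((ι → Fin 2) × (κ → Fin 2)) ℂ) :
    (pauliCoeff O * (pauliCoeff O)ᴴ * (pauliCoeff O * (pauliCoeff O)ᴴ)).trace =
      ((2 : ℂ) ^ Fintype.card ι * 2 ^ Fintype.card κ) ^ 2 *
        (swapA _ _ * (O ⊗ₖ O) * swapA _ _ * (Oᴴ ⊗ₖ Oᴴ)).trace := by
  rw [trace_swapA_mul_kronecker, pauliCoeff, trace_gram_sq_conj
    pauliBasisMatrix_conjTranspose_mul_self pauliBasisMatrix_conjTranspose_mul_self]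

theorem ElinR_eq_one_sub_re_trace_pauliCoeff_gram_sq
    (O : Matrix ((ι → Fin 2) × (κ → Fin 2)) ((ι → Fin 2) × (κ → Fin 2)) ℂ) :
    ElinR O = 1 - (((2 : ℝ) ^ Fintype.card ι * 2 ^ Fintype.card κ) ^ 4)⁻¹ *
      (pauliCoeff O * (pauliCoeff O)ᴴ * (pauliCoeff O * (pauliCoeff O)ᴴ)).trace.re := by
  have hT : (swapA _ _ * (O ⊗ₖ O) * swapA _ _ * (Oᴴ ⊗ₖ Oᴴ)).trace =
      (((2 : ℂ) ^ Fintype.card ι * 2 ^ Fintype.card κ) ^ 2)⁻¹ *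
        (pauliCoeff O * (pauliCoeff O)ᴴ * (pauliCoeff O * (pauliCoeff O)ᴴ)).trace := by
    rw [trace_pauliCoeff_gram_sq]; field_simp
  rw [ElinR, ElinC, hT, ← Complex.re_ofReal_mul, ← Complex.one_re, ← Complex.sub_re]
  simp only [Fintype.card_fun, Fintype.card_fin]
  push_cast
  congr 1
  ring

end PauliBasis

theorem Elin_le_Mlin_general {NA NB : ℕ}
    (O : Matrix ((Fin NA → Fin 2) × (Fin NB → Fin 2))
      ((Fin NA → Fin 2) × (Fin NB → Fin 2)) ℂ) :
    ElinR O ≤ MlinP O := by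
  rw [ElinR_eq_one_sub_re_trace_pauliCoeff_gram_sq, MlinP, Fintype.card_fin, Fintype.card_fin,
    pow_add]
  simp only [pauliP, trace_mul_pauliString_kronecker]
  gcongr
  exact sum_norm_pow_four_le_re_trace_sq _

/-- for every unitary `O`, the linear operator stabilizer entropy
upper-bounds the linear operator entanglement: `E_lin(O) ≤ M_lin(O)`. -/
theorem Elin_le_Mlin {NA NB : ℕ}
    (O : Matrix ((Fin NA → Fin 2) × (Fin NB → Fin 2))
      ((Fin NA → Fin 2) × (Fin NB → Fin 2)) ℂ)
    (hO : O ∈ Matrix.unitaryGroup ((Fin NA → Fin 2) × (Fin NB → Fin 2)) ℂ) :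
    ElinR O ≤ MlinP O :=
  Elin_le_Mlin_general O
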